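/- arXiv:2010.12191 — 2 statements merged into one kernel-verified Lean document; each statement's English description precedes it below -/
import Mathlib

section
/- Let f be L-smooth on ℝ^d (or on a ball containing the iterates), and suppose the sequence u_0, u_1, ..., u_t satisfies u_j = u_{j-1} - η v_{j-1} and the accumulated estimation error bound ‖v_{j-1} - ∇f(u_{j-1})‖² ≤ (c₁² L² / b) · Σ_{i=1}^{j-1} ‖u_i - u_{i-1}‖² for all j ≤ t, with b ≥ t, c₁ ≥ 1, and η ≤ 1/(2 c₁ L). Then f(u_t) - f(u_0) ≤ -(η/2) Σ_{j=1}^t ‖∇f(u_{j-1})‖² - (c₁ L / 4) Σ_{j=1}^t ‖u_j - u_{j-1}‖². -/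
/-!
Summing the one-step descent inequality telescopes to `f (u t) - f (u 0)`. Since `t ≤ b`, the
accumulated estimation errors add up to at most `c₁² L² D`, where `D = ∑ ‖u j - u (j-1)‖²`, and the
step-size condition `η c₁ L ≤ 1/2` gives `1/(2η) - L/2 - η (c₁ L)²/2 ≥ c₁ L / 4`, so the movement
term `-(1/(2η) - L/2) D` absorbs them and leaves `-(c₁ L / 4) D`.
-/
open InnerProductSpace Finset

section Descent

variable {E : Type*} [NormedAddCommGroup E] [InnerProductSpace ℝ E] [CompleteSpace E]
  {f : E → ℝ} {g : E → E}

lemma hasDerivAt_comp_add_smul_of_hasGradientAt (hg : ∀ x, HasGradientAt f (g x) x)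
    (x w : E) (s : ℝ) :
    HasDerivAt (fun s : ℝ => f (x + s • w)) ⟪g (x + s • w), w⟫_ℝ s := by
  have hline : HasDerivAt (fun s : ℝ => x + s • w) w s := by
    simpa using ((hasDerivAt_id s).smul_const w).const_add x
  simpa [toDual_apply_apply, Function.comp_def] using
    (hg (x + s • w)).hasFDerivAt.comp_hasDerivAt s hline

theorem le_add_inner_add_of_lipschitz_gradient (hg : ∀ x, HasGradientAt f (g x) x) {L : ℝ}
    (hlip : ∀ x y : E, ‖g x - g y‖ ≤ L * ‖x - y‖) (x y : E) :
    f y ≤ f x + ⟪g x, y - x⟫_ℝ + L / 2 * ‖y - x‖ ^ 2 := by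
  set w := y - x
  -- `φ` is the gap to the quadratic upper model along the segment; its derivative is `≤ 0`.
  set φ : ℝ → ℝ := fun s => f (x + s • w) - s * ⟪g x, w⟫_ℝ - s ^ 2 * (L / 2 * ‖w‖ ^ 2)
  have hφ : ∀ s, HasDerivAt φ (⟪g (x + s • w) - g x, w⟫_ℝ - s * (L * ‖w‖ ^ 2)) s := by
    intro s
    refine (((hasDerivAt_comp_add_smul_of_hasGradientAt hg x w s).sub
      ((hasDerivAt_id' s).mul_const ⟪g x, w⟫_ℝ)).sub
      ((hasDerivAt_pow 2 s).mul_const (L / 2 * ‖w‖ ^ 2))).congr_deriv ?_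
    rw [inner_sub_left]
    push_cast
    ring
  have hanti : AntitoneOn φ (Set.Icc 0 1) := by
    refine antitoneOn_of_hasDerivWithinAt_nonpos (convex_Icc 0 1)
      (fun s _ => (hφ s).continuousAt.continuousWithinAt)
      (fun s _ => (hφ s).hasDerivWithinAt) ?_
    intro s hs
    rw [interior_Icc] at hs
    obtain ⟨hs₀, -⟩ := hs
    have hgs : ‖g (x + s • w) - g x‖ ≤ L * (s * ‖w‖) := by
      simpa [norm_smul, abs_of_pos hs₀] using hlip (x + s • w) x
    have := real_inner_le_norm (g (x + s • w) - g x) w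
    nlinarith [mul_le_mul_of_nonneg_right hgs (norm_nonneg w)]
  have h01 := hanti (Set.left_mem_Icc.2 zero_le_one) (Set.right_mem_Icc.2 zero_le_one) zero_le_one
  simp only [φ, w, one_smul, zero_smul, add_zero, add_sub_cancel] at h01
  linarith

theorem sub_le_of_lipschitz_gradient_of_eq_sub_smul (hg : ∀ x, HasGradientAt f (g x) x) {L : ℝ}
    (hlip : ∀ x y : E, ‖g x - g y‖ ≤ L * ‖x - y‖) {η : ℝ} (hη : 0 < η) {x y v : E}
    (hy : y = x - η • v) :
    f y - f x ≤ -(η / 2) * ‖g x‖ ^ 2 + η / 2 * ‖v - g x‖ ^ 2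
      - (1 / (2 * η) - L / 2) * ‖y - x‖ ^ 2 := by
  have hdescent := le_add_inner_add_of_lipschitz_gradient hg hlip x y
  have hyx : y - x = -(η • v) := by rw [hy]; abel
  rw [hyx, inner_neg_right, real_inner_smul_right, norm_neg, norm_smul, Real.norm_eq_abs,
    abs_of_pos hη] at hdescent
  rw [hyx, norm_neg, norm_smul, Real.norm_eq_abs, abs_of_pos hη, norm_sub_sq_real,
    real_inner_comm]
  field_simp
  field_simp at hdescent
  nlinarith

end Descent

lemma sum_Icc_one_sub_pred {M : Type*} [AddCommGroup M] (a : ℕ → M) (t : ℕ) :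
    ∑ j ∈ Icc 1 t, (a j - a (j - 1)) = a t - a 0 := by
  induction t with
  | zero => simp
  | succ t ih => rw [sum_Icc_succ_top (by omega), ih, Nat.add_sub_cancel]; abel

lemma sum_le_mul_sum_of_le_div_mul_sum_Icc {e s : ℕ → ℝ} {C : ℝ} {b t : ℕ} (hC : 0 ≤ C)
    (hs : ∀ i, 0 ≤ s i) (hb : t ≤ b)
    (he : ∀ j ∈ Icc 1 t, e j ≤ C / b * ∑ i ∈ Icc 1 (j - 1), s i) :
    ∑ j ∈ Icc 1 t, e j ≤ C * ∑ j ∈ Icc 1 t, s j := by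
  have htb : (t : ℝ) / b ≤ 1 := div_le_one_of_le₀ (by exact_mod_cast hb) b.cast_nonneg
  calc ∑ j ∈ Icc 1 t, e j ≤ ∑ j ∈ Icc 1 t, C / b * ∑ i ∈ Icc 1 t, s i := by
        refine sum_le_sum fun j hj => (he j hj).trans ?_
        have hsub : Icc 1 (j - 1) ⊆ Icc 1 t := Icc_subset_Icc_right (by grind)
        gcongr
        exact fun i _ _ => hs i
    _ = t / b * (C * ∑ j ∈ Icc 1 t, s j) := by
        rw [sum_const, Nat.card_Icc, nsmul_eq_mul, Nat.add_sub_cancel]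
        ring
    _ ≤ C * ∑ j ∈ Icc 1 t, s j :=
        mul_le_of_le_one_left (mul_nonneg hC (sum_nonneg fun i _ => hs i)) htb

lemma quarter_le_inv_two_mul_sub {η L κ : ℝ} (hη : 0 < η) (hκ : 0 ≤ κ) (hLκ : L ≤ κ)
    (hηκ : η * κ ≤ 1 / 2) :
    κ / 4 ≤ 1 / (2 * η) - L / 2 - η * κ ^ 2 / 2 := by
  have hinv : κ ≤ 1 / (2 * η) := by rw [le_div_iff₀ (by positivity)]; linarith
  nlinarith [mul_le_mul_of_nonneg_right hηκ hκ]

/-- Deterministic core of the variance-reduced descent lemma. -/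
theorem stmt_4 (d : ℕ) (f : EuclideanSpace ℝ (Fin d) → ℝ)
    (g : EuclideanSpace ℝ (Fin d) → EuclideanSpace ℝ (Fin d))
    (hg : ∀ x, HasGradientAt f (g x) x)
    (L : ℝ) (hL : 0 < L)
    (hlip : ∀ x y : EuclideanSpace ℝ (Fin d), ‖g x - g y‖ ≤ L * ‖x - y‖)
    (u v : ℕ → EuclideanSpace ℝ (Fin d))
    (η c₁ : ℝ) (b t : ℕ)
    (hb : t ≤ b) (hc₁ : 1 ≤ c₁) (hη : 0 < η) (hη' : η ≤ 1/(2*c₁*L))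
    (hstep : ∀ j ∈ Finset.Icc 1 t, u j = u (j-1) - η • v (j-1))
    (herr : ∀ j ∈ Finset.Icc 1 t,
      ‖v (j-1) - g (u (j-1))‖^2 ≤
        c₁^2 * L^2 / (b : ℝ) * ∑ i ∈ Finset.Icc 1 (j-1), ‖u i - u (i-1)‖^2) :
    f (u t) - f (u 0) ≤ -(η/2) * ∑ j ∈ Finset.Icc 1 t, ‖g (u (j-1))‖^2
      - c₁ * L / 4 * ∑ j ∈ Finset.Icc 1 t, ‖u j - u (j-1)‖^2 := by
  have hηκ : η * (c₁ * L) ≤ 1 / 2 := by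
    rw [le_div_iff₀ (by positivity)] at hη'
    linarith
  have habsorb := quarter_le_inv_two_mul_sub hη (by positivity)
    (le_mul_of_one_le_left hL.le hc₁) hηκ
  have herr_sum := sum_le_mul_sum_of_le_div_mul_sum_Icc (by positivity)
    (fun i => sq_nonneg _) hb herr
  set G := ∑ j ∈ Icc 1 t, ‖g (u (j - 1))‖ ^ 2
  set D := ∑ j ∈ Icc 1 t, ‖u j - u (j - 1)‖ ^ 2
  have hD : 0 ≤ D := sum_nonneg fun j _ => sq_nonneg _
  rw [← sum_Icc_one_sub_pred (fun j => f (u j))]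
  calc ∑ j ∈ Icc 1 t, (f (u j) - f (u (j - 1)))
      ≤ ∑ j ∈ Icc 1 t, (-(η / 2) * ‖g (u (j - 1))‖ ^ 2 + η / 2 * ‖v (j - 1) - g (u (j - 1))‖ ^ 2
          - (1 / (2 * η) - L / 2) * ‖u j - u (j - 1)‖ ^ 2) :=
        sum_le_sum fun j hj => sub_le_of_lipschitz_gradient_of_eq_sub_smul hg hlip hη (hstep j hj)
    _ = -(η / 2) * G + η / 2 * ∑ j ∈ Icc 1 t, ‖v (j - 1) - g (u (j - 1))‖ ^ 2
          - (1 / (2 * η) - L / 2) * D := by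
        simp only [sum_sub_distrib, sum_add_distrib, mul_sum, G, D]
    _ ≤ -(η / 2) * G - c₁ * L / 4 * D := by
        linarith [mul_le_mul_of_nonneg_left herr_sum (by positivity : (0 : ℝ) ≤ η / 2),
          mul_le_mul_of_nonneg_right habsorb hD]
end

section
/- Let y₀, y₁, ..., y_m be a martingale in ℝ^d (adapted to a filtration) with y₀ = 0, whose difference sequence z_k = y_k - y_{k-1} satisfies ‖z_k‖ ≤ c_k almost surely. Then for any ς ≥ 0, Pr(‖y_m‖ ≥ ς) ≤ (d+1) exp(-ς² / (8 Σ_{k=1}^m c_k²)). -/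
open MeasureTheory Real Nat

section AzumaAux

lemma azuma_cosh_sqrt_eq (l : ℝ) {w : ℝ} (hw : 0 ≤ w) :
    Real.cosh (l * Real.sqrt w) = ∑' (n : ℕ), l ^ (2 * n) * w ^ n / ((2 * n)! : ℝ) := by
  rw [Real.cosh_eq_tsum]
  congr 1; funext n
  rw [mul_pow, pow_mul (Real.sqrt w), Real.sq_sqrt hw, pow_mul l]

lemma azuma_summable (l : ℝ) {w : ℝ} (hw : 0 ≤ w) :
    Summable (fun (n : ℕ) => l ^ (2 * n) * w ^ n / ((2 * n)! : ℝ)) := by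
  have := (Real.hasSum_cosh (l * Real.sqrt w)).summable
  refine this.congr fun (n : ℕ) => ?_
  rw [mul_pow, pow_mul (Real.sqrt w), Real.sq_sqrt hw, pow_mul l]

lemma azuma_convexOn (l : ℝ) :
    ConvexOn ℝ (Set.Ici (0:ℝ)) (fun u => Real.cosh (l * Real.sqrt u)) := by
  refine ⟨convex_Ici 0, fun u hu v hv a b ha hb hab => ?_⟩
  simp only [Set.mem_Ici] at hu hv
  have huv : 0 ≤ a * u + b * v := by positivity
  simp only [smul_eq_mul]
  rw [azuma_cosh_sqrt_eq l huv, azuma_cosh_sqrt_eq l hu, azuma_cosh_sqrt_eq l hv,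
    ← tsum_mul_left, ← tsum_mul_left, ← Summable.tsum_add ((azuma_summable l hu).mul_left a)
      ((azuma_summable l hv).mul_left b)]
  refine Summable.tsum_le_tsum (fun (n : ℕ) => ?_) (azuma_summable l huv)
    (((azuma_summable l hu).mul_left a).add ((azuma_summable l hv).mul_left b))
  have hpow : (a * u + b * v) ^ n ≤ a * u ^ n + b * v ^ n := by
    have := (convexOn_pow (𝕜 := ℝ) n).2 hu hv ha hb hab
    simpa using this
  have hl : (0:ℝ) ≤ l ^ (2 * n) := (even_two_mul n).pow_nonneg l
  have hco : (0:ℝ) ≤ l ^ (2 * n) / ((2 * n)! : ℝ) :=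
    div_nonneg hl (Nat.cast_nonneg _)
  calc l ^ (2 * n) * (a * u + b * v) ^ n / ((2 * n)! : ℝ)
      = l ^ (2 * n) / ((2 * n)! : ℝ) * (a * u + b * v) ^ n := by ring
    _ ≤ l ^ (2 * n) / ((2 * n)! : ℝ) * (a * u ^ n + b * v ^ n) := by
        exact mul_le_mul_of_nonneg_left hpow hco
    _ = a * (l ^ (2 * n) * u ^ n / ((2 * n)! : ℝ)) + b * (l ^ (2 * n) * v ^ n / ((2 * n)! : ℝ)) := by ring

variable {E : Type*} [NormedAddCommGroup E] [InnerProductSpace ℝ E]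

lemma azuma_pointwise (l c : ℝ) (hl : 0 ≤ l) (x z : E) (hz : ‖z‖ ≤ c) :
    Real.cosh (l * ‖x + z‖) ≤ Real.cosh (l * ‖x‖) * Real.cosh (l * c)
      + (Real.cosh (l * (‖x‖ + c)) - Real.cosh (l * (‖x‖ - c))) / (2 * ‖x‖ * c)
        * (inner ℝ x z : ℝ) := by
  have hc : 0 ≤ c := le_trans (norm_nonneg z) hz
  set s := ‖x‖ with hs
  set t : ℝ := inner ℝ x z with htdef
  have hs0 : 0 ≤ s := norm_nonneg x
  have ht : |t| ≤ s * c :=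
    le_trans (abs_real_inner_le_norm x z) (mul_le_mul_of_nonneg_left hz hs0)
  rcases eq_or_lt_of_le hc with hc0 | hc0
  · -- c = 0
    have hz0 : z = 0 := norm_le_zero_iff.mp (by rw [hc0]; exact hz)
    subst hz0
    simp [htdef, ← hc0, hs]
  rcases eq_or_lt_of_le hs0 with hs0' | hs0'
  · -- s = 0
    have hx0 : x = 0 := norm_eq_zero.mp hs0'.symm
    subst hx0
    have : Real.cosh (l * ‖(0:E) + z‖) ≤ Real.cosh (l * c) := by
      rw [Real.cosh_le_cosh]
      rw [abs_of_nonneg (by positivity), abs_of_nonneg (by positivity)]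
      simpa using mul_le_mul_of_nonneg_left hz hl
    simp only [htdef, ← hs0', inner_zero_left, mul_zero, add_zero, norm_zero, zero_add,
      Real.cosh_zero, one_mul] at this ⊢
    exact this
  -- main case s > 0, c > 0
  have hsc : (0:ℝ) < 2 * s * c := by positivity
  set a : ℝ := (s * c + t) / (2 * s * c) with hadef
  set b : ℝ := (s * c - t) / (2 * s * c) with hbdef
  have ha : 0 ≤ a := div_nonneg (by nlinarith [neg_abs_le t]) hsc.le
  have hb : 0 ≤ b := div_nonneg (by nlinarith [le_abs_self t]) hsc.le
  have hab : a + b = 1 := by rw [hadef, hbdef, ← add_div, div_eq_one_iff_eq hsc.ne']; ring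
  have hconv := (azuma_convexOn l).2 (Set.mem_Ici.mpr (sq_nonneg (s + c)))
    (Set.mem_Ici.mpr (sq_nonneg (s - c))) ha hb hab
  simp only [smul_eq_mul] at hconv
  have hmix : a * (s + c) ^ 2 + b * (s - c) ^ 2 = s ^ 2 + c ^ 2 + 2 * t := by
    rw [hadef, hbdef]; field_simp; ring
  rw [hmix] at hconv
  have h1 : Real.sqrt ((s + c) ^ 2) = s + c := Real.sqrt_sq (by positivity)
  have h2 : Real.cosh (l * Real.sqrt ((s - c) ^ 2)) = Real.cosh (l * (s - c)) := by
    have h3 : l * Real.sqrt ((s - c) ^ 2) = |l * (s - c)| := by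
      rw [Real.sqrt_sq_eq_abs, abs_mul, abs_of_nonneg hl]
    rw [h3, Real.cosh_abs]
  rw [h1, h2] at hconv
  -- monotone step
  have hmono : Real.cosh (l * ‖x + z‖) ≤ Real.cosh (l * Real.sqrt (s ^ 2 + c ^ 2 + 2 * t)) := by
    rw [Real.cosh_le_cosh, abs_of_nonneg (by positivity), abs_of_nonneg (by positivity)]
    refine mul_le_mul_of_nonneg_left ?_ hl
    rw [← Real.sqrt_sq (norm_nonneg (x + z))]
    refine Real.sqrt_le_sqrt ?_
    have := @norm_add_sq_real E _ _ x z
    nlinarith [sq_nonneg (‖z‖ - c), norm_nonneg z]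
  refine le_trans hmono (le_trans hconv (le_of_eq ?_))
  have hcadd : Real.cosh (l * (s + c)) = Real.cosh (l*s) * Real.cosh (l*c)
      + Real.sinh (l*s) * Real.sinh (l*c) := by
    rw [show l * (s + c) = l*s + l*c by ring, Real.cosh_add]
  have hcsub : Real.cosh (l * (s - c)) = Real.cosh (l*s) * Real.cosh (l*c)
      - Real.sinh (l*s) * Real.sinh (l*c) := by
    rw [show l * (s - c) = l*s - l*c by ring, Real.cosh_sub]
  rw [hcadd, hcsub, hadef, hbdef]
  field_simp
  ring

lemma azuma_coeff_bound (l cc s t C : ℝ) (hl : 0 ≤ l) (hcc : 0 ≤ cc) (hs : 0 ≤ s)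
    (hsC : s ≤ C) (ht : |t| ≤ s * cc) :
    |(Real.cosh (l * (s + cc)) - Real.cosh (l * (s - cc))) / (2 * s * cc) * t|
      ≤ Real.cosh (l * (C + cc)) := by
  have hM : (0:ℝ) < Real.cosh (l * (C + cc)) := Real.cosh_pos _
  rcases eq_or_lt_of_le hs with h0 | h0
  · have : t = 0 := by
      have : |t| ≤ 0 := by nlinarith
      exact abs_eq_zero.mp (le_antisymm this (abs_nonneg t))
    simp [this, hM.le]
  rcases eq_or_lt_of_le hcc with h1 | h1
  · have : t = 0 := by
      have : |t| ≤ 0 := by nlinarith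
      exact abs_eq_zero.mp (le_antisymm this (abs_nonneg t))
    simp [this, hM.le]
  -- s > 0, cc > 0
  have hnum0 : (0:ℝ) ≤ Real.cosh (l * (s + cc)) - Real.cosh (l * (s - cc)) := by
    have habs : |l * (s - cc)| ≤ |l * (s + cc)| := by
      rw [abs_mul, abs_mul, abs_of_nonneg hl,
        abs_of_nonneg (by positivity : (0:ℝ) ≤ s + cc)]
      refine mul_le_mul_of_nonneg_left ?_ hl
      rw [abs_le]; constructor <;> linarith
    have := Real.cosh_le_cosh.mpr habs
    linarith
  have hnumle : Real.cosh (l * (s + cc)) - Real.cosh (l * (s - cc))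
      ≤ 2 * Real.cosh (l * (C + cc)) := by
    have h2 : Real.cosh (l * (s + cc)) ≤ Real.cosh (l * (C + cc)) := by
      rw [Real.cosh_le_cosh, abs_mul, abs_mul, abs_of_nonneg hl,
        abs_of_nonneg (by linarith : (0:ℝ) ≤ s + cc),
        abs_of_nonneg (by linarith : (0:ℝ) ≤ C + cc)]
      nlinarith
    have h3 : (0:ℝ) < Real.cosh (l * (s - cc)) := Real.cosh_pos _
    linarith
  rw [abs_mul, abs_div, abs_of_nonneg hnum0, abs_of_nonneg (by positivity : (0:ℝ) ≤ 2*s*cc)]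
  calc (Real.cosh (l * (s + cc)) - Real.cosh (l * (s - cc))) / (2 * s * cc) * |t|
      ≤ (Real.cosh (l * (s + cc)) - Real.cosh (l * (s - cc))) / (2 * s * cc) * (s * cc) :=
        mul_le_mul_of_nonneg_left ht (by positivity)
    _ = (Real.cosh (l * (s + cc)) - Real.cosh (l * (s - cc))) / 2 := by
        field_simp
    _ ≤ Real.cosh (l * (C + cc)) := by linarith

lemma azuma_coord_le {d : ℕ} (v : EuclideanSpace ℝ (Fin d)) (i : Fin d) : |v i| ≤ ‖v‖ := by
  rw [EuclideanSpace.norm_eq, ← Real.sqrt_sq (abs_nonneg (v i))]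
  apply Real.sqrt_le_sqrt
  have := Finset.single_le_sum (f := fun j => ‖v j‖^2) (fun j _ => sq_nonneg _)
    (Finset.mem_univ i)
  simpa [Real.norm_eq_abs, sq_abs] using this

lemma azuma_exp_rec (d : ℕ) {Ω : Type*} {mΩ : MeasurableSpace Ω} (μ : Measure Ω)
    [IsProbabilityMeasure μ]
    (ℱ : Filtration ℕ mΩ)
    (y : ℕ → Ω → EuclideanSpace ℝ (Fin d))
    (hy : Martingale y ℱ μ)
    (hy0 : y 0 = 0)
    (m : ℕ) (c : ℕ → ℝ)
    (hc : ∀ k ∈ Finset.Icc 1 m, ∀ᵐ ω ∂μ, ‖y k ω - y (k-1) ω‖ ≤ c k)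
    (l : ℝ) (hl : 0 ≤ l) :
    ∀ k, k ≤ m → Integrable (fun ω => Real.cosh (l * ‖y k ω‖)) μ ∧
      ∫ ω, Real.cosh (l * ‖y k ω‖) ∂μ
      ≤ ∏ j ∈ Finset.Icc 1 k, Real.cosh (l * c j) := by
  classical
  set C := ∑ j ∈ Finset.Icc 1 m, |c j| with hCdef
  have hsm : ∀ k, StronglyMeasurable (y k) := fun k => (hy.stronglyAdapted k).mono (ℱ.le k)
  have hAE : ∀ᵐ ω ∂μ, ∀ k ∈ Finset.Icc 1 m, ‖y k ω - y (k-1) ω‖ ≤ c k :=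
    (ae_ball_iff (Finset.Icc 1 m).countable_toSet).mpr hc
  have hbdpart : ∀ᵐ ω ∂μ, ∀ k, k ≤ m → ‖y k ω‖ ≤ ∑ j ∈ Finset.Icc 1 k, |c j| := by
    filter_upwards [hAE] with ω hω
    intro k
    induction k with
    | zero =>
      intro _
      simp [hy0]
    | succ n ih =>
      intro hk
      have hn : n ≤ m := Nat.le_of_succ_le hk
      have h1 : ‖y (n+1) ω‖ ≤ ‖y n ω‖ + ‖y (n+1) ω - y n ω‖ := by
        have := norm_add_le (y n ω) (y (n+1) ω - y n ω)
        simpa using this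
      have h2 : ‖y (n+1) ω - y n ω‖ ≤ c (n+1) := by
        have := hω (n+1) (Finset.mem_Icc.mpr ⟨Nat.succ_le_succ (Nat.zero_le n), hk⟩)
        simpa using this
      rw [Finset.sum_Icc_succ_top (Nat.succ_le_succ (Nat.zero_le n))]
      have := ih hn
      have h3 : c (n+1) ≤ |c (n+1)| := le_abs_self _
      linarith
  have hbd : ∀ᵐ ω ∂μ, ∀ k, k ≤ m → ‖y k ω‖ ≤ C := by
    filter_upwards [hbdpart] with ω hω
    intro k hk
    refine (hω k hk).trans ?_
    exact Finset.sum_le_sum_of_subset_of_nonneg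
      (Finset.Icc_subset_Icc_right hk) (fun j _ _ => abs_nonneg _)
  have hC0 : 0 ≤ C := Finset.sum_nonneg fun j _ => abs_nonneg _
  have hXsm : ∀ k, StronglyMeasurable fun ω => Real.cosh (l * ‖y k ω‖) := fun k =>
    (Real.continuous_cosh.comp (continuous_const.mul continuous_norm)).comp_stronglyMeasurable
      (hsm k)
  have hXint : ∀ k, k ≤ m → Integrable (fun ω => Real.cosh (l * ‖y k ω‖)) μ := by
    intro k hk
    refine Integrable.mono' (integrable_const (Real.cosh (l * C)))
      (hXsm k).aestronglyMeasurable ?_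
    filter_upwards [hbd] with ω hω
    rw [Real.norm_eq_abs, abs_of_pos (Real.cosh_pos _), Real.cosh_le_cosh,
      abs_mul, abs_mul, abs_of_nonneg hl, abs_of_nonneg (norm_nonneg _), abs_of_nonneg hC0]
    exact mul_le_mul_of_nonneg_left (hω k hk) hl
  refine fun k hk => ⟨hXint k hk, ?_⟩
  revert hk
  induction k with
  | zero =>
    intro _
    simp [hy0]
  | succ n ih =>
    intro hk
    have hn : n ≤ m := Nat.le_of_succ_le hk
    have ihn := ih hn
    clear ih
    set cc := c (n+1) with hccdef
    set z : Ω → EuclideanSpace ℝ (Fin d) := fun ω => y (n+1) ω - y n ω with hzdef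
    set B : EuclideanSpace ℝ (Fin d) → ℝ := fun v =>
      (Real.cosh (l * (‖v‖ + cc)) - Real.cosh (l * (‖v‖ - cc))) / (2 * ‖v‖ * cc) with hBdef
    set W : Ω → ℝ := fun ω => B (y n ω) * (inner ℝ (y n ω) (z ω) : ℝ) with hWdef
    have hzsm : StronglyMeasurable z := (hsm (n+1)).sub (hsm n)
    have hzc : ∀ᵐ ω ∂μ, ‖z ω‖ ≤ cc := by
      filter_upwards [hAE] with ω hω
      have := hω (n+1) (Finset.mem_Icc.mpr ⟨Nat.succ_le_succ (Nat.zero_le n), hk⟩)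
      simpa [hzdef] using this
    have hcc0 : 0 ≤ cc := by
      haveI : (MeasureTheory.ae μ).NeBot := ae_neBot.mpr (IsProbabilityMeasure.ne_zero μ)
      rcases hzc.exists with ⟨ω, h1⟩
      exact le_trans (norm_nonneg (z ω)) h1
    -- pointwise inequality a.e.
    have hptw : ∀ᵐ ω ∂μ, Real.cosh (l * ‖y (n+1) ω‖)
        ≤ Real.cosh (l * ‖y n ω‖) * Real.cosh (l * cc) + W ω := by
      filter_upwards [hzc] with ω hω
      have := azuma_pointwise l cc hl (y n ω) (z ω) hω
      have hyz : y n ω + z ω = y (n+1) ω := by simp [hzdef]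
      rw [hyz] at this
      exact this
    -- measurability of B ∘ y n
    have hBmeas : Measurable B := by
      apply Measurable.div
      · exact (Real.continuous_cosh.comp
          (continuous_const.mul (continuous_norm.add continuous_const))).measurable.sub
          (Real.continuous_cosh.comp
          (continuous_const.mul (continuous_norm.sub continuous_const))).measurable
      · exact ((continuous_const.mul continuous_norm).mul continuous_const).measurable
    have hBn : StronglyMeasurable[ℱ n] fun ω => B (y n ω) :=
      (hBmeas.comp (hy.stronglyAdapted n).measurable).stronglyMeasurable
    -- bound on W
    have hWbd : ∀ᵐ ω ∂μ, |W ω| ≤ Real.cosh (l * (C + cc)) := by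
      filter_upwards [hbd, hzc] with ω h1 h2
      rw [hWdef]
      have hinner : |(inner ℝ (y n ω) (z ω) : ℝ)| ≤ ‖y n ω‖ * cc :=
        (abs_real_inner_le_norm _ _).trans
          (mul_le_mul_of_nonneg_left h2 (norm_nonneg _))
      exact azuma_coeff_bound l cc (‖y n ω‖) _ C hl hcc0 (norm_nonneg _) (h1 n hn) hinner
    have hWsm : StronglyMeasurable W := by
      apply StronglyMeasurable.mul
      · exact (hBmeas.comp (hsm n).measurable).stronglyMeasurable
      · exact ((hsm n).measurable.inner hzsm.measurable).stronglyMeasurable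
    have hWint : Integrable W μ := by
      refine Integrable.mono' (integrable_const (Real.cosh (l * (C + cc))))
        hWsm.aestronglyMeasurable ?_
      filter_upwards [hWbd] with ω hω
      simpa using hω
    -- integral of W is zero
    have hWzero : ∫ ω, W ω ∂μ = 0 := by
      have hWeq : W = fun ω => ∑ i, (fun ω => B (y n ω) * y n ω i) ω
          * (fun ω => z ω i) ω := by
        funext ω
        simp only [hWdef, PiLp.inner_apply, RCLike.inner_apply, conj_trivial,
          Finset.mul_sum]
        exact Finset.sum_congr rfl fun i _ => by ring
      have hz'sm : ∀ i : Fin d, StronglyMeasurable fun ω => z ω i := fun i =>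
        ((EuclideanSpace.proj (𝕜 := ℝ) i).continuous.measurable.comp hzsm.measurable).stronglyMeasurable
      have hz'int : ∀ i : Fin d, Integrable (fun ω => z ω i) μ := by
        intro i
        refine Integrable.mono' (integrable_const cc) (hz'sm i).aestronglyMeasurable ?_
        filter_upwards [hzc] with ω hω
        exact le_trans (azuma_coord_le (z ω) i) hω
      have hz'cond : ∀ i : Fin d,
          (0 : Ω → ℝ) =ᵐ[μ] μ[fun ω => z ω i | ℱ n] := by
        intro i
        refine ae_eq_condExp_of_forall_setIntegral_eq (ℱ.le n) (hz'int i)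
          (fun s _ _ => (integrable_zero _ _ _).integrableOn)
          (fun s hs hμs => ?_)
          (stronglyMeasurable_const.aestronglyMeasurable)
        have hzint : Integrable z μ := (hy.integrable (n+1)).sub (hy.integrable n)
        have h1 : ∫ ω in s, z ω i ∂μ
            = EuclideanSpace.proj (𝕜 := ℝ) i (∫ ω in s, z ω ∂μ) := by
          rw [← (EuclideanSpace.proj (𝕜 := ℝ) i).integral_comp_comm hzint.integrableOn]
          rfl
        have h2 : ∫ ω in s, z ω ∂μ = 0 := by
          rw [hzdef]
          rw [integral_sub (hy.integrable (n+1)).integrableOn (hy.integrable n).integrableOn]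
          rw [← hy.setIntegral_eq (Nat.le_succ n) hs]
          simp
        simp [h1, h2]
      have hgsm : ∀ i : Fin d, StronglyMeasurable[ℱ n] fun ω => B (y n ω) * y n ω i := by
        intro i
        apply StronglyMeasurable.mul hBn
        exact (((EuclideanSpace.proj (𝕜 := ℝ) i).continuous.measurable).comp
          (hy.stronglyAdapted n).measurable).stronglyMeasurable
      have hgz : ∀ i : Fin d, Integrable
          ((fun ω => B (y n ω) * y n ω i) * fun ω => z ω i) μ := by
        intro i
        refine Integrable.mono' (integrable_const (Real.cosh (l * (C + cc))))
          ((((hgsm i).mono (ℱ.le n)).mul (hz'sm i)).aestronglyMeasurable) ?_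
        filter_upwards [hbd, hzc] with ω h1 h2
        have ht : |y n ω i * z ω i| ≤ ‖y n ω‖ * cc := by
          rw [abs_mul]
          exact mul_le_mul (azuma_coord_le _ _) (le_trans (azuma_coord_le _ _) h2)
            (abs_nonneg _) (norm_nonneg _)
        have := azuma_coeff_bound l cc (‖y n ω‖) (y n ω i * z ω i) C hl hcc0
          (norm_nonneg _) (h1 n hn) ht
        rw [Real.norm_eq_abs]
        calc |((fun ω => B (y n ω) * y n ω i) * fun ω => z ω i) ω|
            = |B (y n ω) * (y n ω i * z ω i)| := by
              simp only [Pi.mul_apply]; ring_nf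
          _ ≤ Real.cosh (l * (C + cc)) := this
      have hterm : ∀ i : Fin d,
          ∫ ω, (fun ω => B (y n ω) * y n ω i) ω * (fun ω => z ω i) ω ∂μ = 0 := by
        intro i
        have hpull := condExp_mul_of_stronglyMeasurable_left (hgsm i) (hgz i) (hz'int i)
        have hzero : μ[(fun ω => B (y n ω) * y n ω i) * fun ω => z ω i | ℱ n]
            =ᵐ[μ] 0 := by
          refine hpull.trans ?_
          filter_upwards [(hz'cond i).symm] with ω hω
          simp [Pi.mul_apply, hω]
        calc ∫ ω, (fun ω => B (y n ω) * y n ω i) ω * (fun ω => z ω i) ω ∂μ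
            = ∫ ω, ((fun ω => B (y n ω) * y n ω i) * fun ω => z ω i) ω ∂μ := rfl
          _ = ∫ ω, (μ[(fun ω => B (y n ω) * y n ω i) * fun ω => z ω i | ℱ n]) ω ∂μ :=
              (integral_condExp (ℱ.le n)).symm
          _ = ∫ ω, (0 : Ω → ℝ) ω ∂μ := integral_congr_ae hzero
          _ = 0 := by simp
      rw [hWeq]
      rw [integral_finset_sum]
      · exact Finset.sum_eq_zero fun i _ => hterm i
      · intro i _
        exact hgz i
    -- put it together
    have hrhsint : Integrable (fun ω => Real.cosh (l * ‖y n ω‖) * Real.cosh (l * cc) + W ω) μ :=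
      ((hXint n hn).mul_const _).add hWint
    have hmain : ∫ ω, Real.cosh (l * ‖y (n+1) ω‖) ∂μ
        ≤ ∫ ω, (Real.cosh (l * ‖y n ω‖) * Real.cosh (l * cc) + W ω) ∂μ :=
      integral_mono_ae (hXint (n+1) hk) hrhsint hptw
    rw [integral_add ((hXint n hn).mul_const _) hWint, integral_mul_const, hWzero,
      add_zero] at hmain
    rw [Finset.prod_Icc_succ_top (Nat.succ_le_succ (Nat.zero_le n))]
    refine hmain.trans ?_
    have hcoshpos : (0:ℝ) ≤ Real.cosh (l * cc) := (Real.cosh_pos _).le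
    calc (∫ ω, Real.cosh (l * ‖y n ω‖) ∂μ) * Real.cosh (l * cc)
        ≤ (∏ j ∈ Finset.Icc 1 n, Real.cosh (l * c j)) * Real.cosh (l * cc) :=
          mul_le_mul_of_nonneg_right ihn hcoshpos
      _ = (∏ j ∈ Finset.Icc 1 n, Real.cosh (l * c j)) * Real.cosh (l * c (n+1)) := by
          rw [hccdef]

end AzumaAux

open MeasureTheory

/-- Vector-valued Azuma–Hoeffding inequality (dimension-dependent form). -/
theorem stmt_15 (d : ℕ) {Ω : Type*} {mΩ : MeasurableSpace Ω} (μ : Measure Ω)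
    [IsProbabilityMeasure μ]
    (ℱ : Filtration ℕ mΩ)
    (y : ℕ → Ω → EuclideanSpace ℝ (Fin d))
    (hy : Martingale y ℱ μ)
    (hy0 : y 0 = 0)
    (m : ℕ) (c : ℕ → ℝ)
    (hc : ∀ k ∈ Finset.Icc 1 m, ∀ᵐ ω ∂μ, ‖y k ω - y (k-1) ω‖ ≤ c k)
    (ς : ℝ) (hς : 0 ≤ ς) :
    μ {ω | ς ≤ ‖y m ω‖} ≤
      ENNReal.ofReal ((d + 1) *
        Real.exp (-ς^2 / (8 * ∑ k ∈ Finset.Icc 1 m, (c k)^2))) := by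
  classical
  set S : ℝ := ∑ k ∈ Finset.Icc 1 m, (c k)^2 with hSdef
  have hS0 : 0 ≤ S := Finset.sum_nonneg fun k _ => sq_nonneg _
  have hd1 : (1:ℝ) ≤ (d:ℝ) + 1 := by
    have := Nat.cast_nonneg (α := ℝ) d
    linarith
  -- trivial case: RHS at least one
  have htriv : (1:ℝ) ≤ ((d:ℝ) + 1) * Real.exp (-ς^2 / (8 * S)) →
      μ {ω | ς ≤ ‖y m ω‖} ≤
        ENNReal.ofReal ((d + 1) * Real.exp (-ς^2 / (8 * S))) := by
    intro h
    calc μ {ω | ς ≤ ‖y m ω‖} ≤ 1 := prob_le_one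
      _ = ENNReal.ofReal 1 := by simp
      _ ≤ _ := ENNReal.ofReal_le_ofReal h
  rcases eq_or_lt_of_le hς with hς0 | hς0
  · apply htriv
    rw [← hς0]
    norm_num
  rcases eq_or_lt_of_le hS0 with hS0' | hSpos
  · apply htriv
    rw [← hS0']
    norm_num
  rcases Nat.eq_zero_or_pos d with hd0 | hdpos
  · subst hd0
    haveI : Subsingleton (EuclideanSpace ℝ (Fin 0)) :=
      ⟨fun a b => by ext i; exact Fin.elim0 i⟩
    have : {ω | ς ≤ ‖y m ω‖} = ∅ := by
      ext ω
      simp only [Set.mem_setOf_eq, Set.mem_empty_iff_false, iff_false, not_le]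
      have : y m ω = 0 := Subsingleton.elim _ _
      rw [this, norm_zero]
      exact hς0
    rw [this]
    simp
  -- main case
  set l : ℝ := ς / S with hldef
  have hl : 0 < l := div_pos hς0 hSpos
  obtain ⟨hint, hbound⟩ := azuma_exp_rec d μ ℱ y hy hy0 m c hc l hl.le m le_rfl
  have hsubset : {ω | ς ≤ ‖y m ω‖} ⊆ {ω | Real.cosh (l * ς) ≤ Real.cosh (l * ‖y m ω‖)} := by
    intro ω hω
    simp only [Set.mem_setOf_eq] at hω ⊢
    rw [Real.cosh_le_cosh, abs_mul, abs_mul, abs_of_nonneg hl.le, abs_of_nonneg hς,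
      abs_of_nonneg (norm_nonneg _)]
    exact mul_le_mul_of_nonneg_left hω hl.le
  have hmarkov := mul_meas_ge_le_integral_of_nonneg
    (f := fun ω => Real.cosh (l * ‖y m ω‖))
    (Filter.Eventually.of_forall fun ω => (Real.cosh_pos _).le) hint (Real.cosh (l * ς))
  have hprod : ∏ j ∈ Finset.Icc 1 m, Real.cosh (l * c j) ≤ Real.exp (l^2 * S / 2) := by
    calc ∏ j ∈ Finset.Icc 1 m, Real.cosh (l * c j)
        ≤ ∏ j ∈ Finset.Icc 1 m, Real.exp ((l * c j)^2 / 2) :=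
          Finset.prod_le_prod (fun j _ => (Real.cosh_pos _).le)
            (fun j _ => Real.cosh_le_exp_half_sq _)
      _ = Real.exp (∑ j ∈ Finset.Icc 1 m, (l * c j)^2 / 2) := by
          rw [Real.exp_sum]
      _ = Real.exp (l^2 * S / 2) := by
          congr 1
          calc ∑ j ∈ Finset.Icc 1 m, (l * c j)^2 / 2
              = ∑ j ∈ Finset.Icc 1 m, (l^2/2) * (c j)^2 :=
                Finset.sum_congr rfl (fun j _ => by ring)
            _ = (l^2/2) * S := by rw [hSdef, Finset.mul_sum]
            _ = l^2 * S / 2 := by ring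
  have hcosh_lb : Real.exp (l * ς) / 2 ≤ Real.cosh (l * ς) := by
    rw [Real.cosh_eq]
    have := Real.exp_pos (-(l * ς))
    linarith
  have hcoshpos : (0:ℝ) < Real.cosh (l * ς) := Real.cosh_pos _
  have htoReal : (μ {ω | ς ≤ ‖y m ω‖}).toReal
      ≤ Real.exp (l^2 * S / 2) / Real.cosh (l * ς) := by
    rw [le_div_iff₀ hcoshpos]
    have h1 : (μ {ω | ς ≤ ‖y m ω‖}).toReal
        ≤ (μ {ω | Real.cosh (l * ς) ≤ Real.cosh (l * ‖y m ω‖)}).toReal := by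
      apply ENNReal.toReal_mono (measure_ne_top μ _)
      exact measure_mono hsubset
    calc (μ {ω | ς ≤ ‖y m ω‖}).toReal * Real.cosh (l * ς)
        ≤ (μ {ω | Real.cosh (l * ς) ≤ Real.cosh (l * ‖y m ω‖)}).toReal
            * Real.cosh (l * ς) := mul_le_mul_of_nonneg_right h1 hcoshpos.le
      _ = Real.cosh (l * ς) * (μ {ω | Real.cosh (l * ς)
            ≤ Real.cosh (l * ‖y m ω‖)}).toReal := mul_comm _ _
      _ ≤ ∫ ω, Real.cosh (l * ‖y m ω‖) ∂μ := hmarkov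
      _ ≤ ∏ j ∈ Finset.Icc 1 m, Real.cosh (l * c j) := hbound
      _ ≤ Real.exp (l^2 * S / 2) := hprod
  have hrhs : Real.exp (l^2 * S / 2) / Real.cosh (l * ς)
      ≤ ((d:ℝ) + 1) * Real.exp (-ς^2 / (8 * S)) := by
    have h1 : Real.exp (l^2 * S / 2) / Real.cosh (l * ς)
        ≤ Real.exp (l^2 * S / 2) / (Real.exp (l * ς) / 2) :=
      div_le_div_of_nonneg_left (Real.exp_pos _).le (by positivity) hcosh_lb
    have h2 : Real.exp (l^2 * S / 2) / (Real.exp (l * ς) / 2)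
        = 2 * Real.exp (l^2 * S / 2 - l * ς) := by
      rw [Real.exp_sub]
      field_simp
    have h3 : l^2 * S / 2 - l * ς = -ς^2 / (2 * S) := by
      rw [hldef]
      field_simp
      ring
    have h4 : -ς^2 / (2 * S) ≤ -ς^2 / (8 * S) := by
      rw [neg_div, neg_div, neg_le_neg_iff]
      exact div_le_div_of_nonneg_left (sq_nonneg ς) (by linarith) (by linarith)
    have h5 : (2:ℝ) ≤ (d:ℝ) + 1 := by
      have : (1:ℝ) ≤ (d:ℝ) := by exact_mod_cast hdpos
      linarith
    calc Real.exp (l^2 * S / 2) / Real.cosh (l * ς)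
        ≤ 2 * Real.exp (l^2 * S / 2 - l * ς) := h1.trans_eq h2
      _ = 2 * Real.exp (-ς^2 / (2 * S)) := by rw [h3]
      _ ≤ ((d:ℝ) + 1) * Real.exp (-ς^2 / (8 * S)) :=
          mul_le_mul h5 (Real.exp_le_exp.mpr h4) (Real.exp_pos _).le (by positivity)
  calc μ {ω | ς ≤ ‖y m ω‖}
      = ENNReal.ofReal ((μ {ω | ς ≤ ‖y m ω‖}).toReal) :=
        (ENNReal.ofReal_toReal (measure_ne_top μ _)).symm
    _ ≤ ENNReal.ofReal (((d:ℝ) + 1) * Real.exp (-ς^2 / (8 * S))) :=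
        ENNReal.ofReal_le_ofReal (htoReal.trans hrhs)
end
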